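/- arXiv:0709.4465 — 3 statements merged into one kernel-verified Lean document; each statement's English description precedes it below -/
import Mathlib

section
/- Let α be a finite type and σ, τ permutations of α that are both cycles, with support(σ) ∪ support(τ) = α (every element is moved by σ or τ). If the product σ * τ is a cycle whose support is all of α (a full cycle of length |α|), then the cardinality of support(σ) ∩ support(τ) is odd. -/
/-!
A cycle `c` has sign `-(-1) ^ #c.support`, so multiplicativity of the sign forces
`#σ.support + #τ.support + #(σ * τ).support` to be odd whenever `σ`, `τ` and `σ * τ` are
cycles.
When `σ * τ` moves every point and the supports of `σ` and `τ` cover `α`, inclusion–exclusion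
rewrites this sum as `2 * Fintype.card α + #(σ.support ∩ τ.support)`.
-/

open Equiv Finset

theorem Equiv.Perm.IsCycle.odd_card_support_add_card_support_add_card_support_mul
    {α : Type*} [Fintype α] [DecidableEq α] {σ τ : Perm α}
    (hσ : σ.IsCycle) (hτ : τ.IsCycle) (hστ : (σ * τ).IsCycle) :
    Odd (#σ.support + #τ.support + #(σ * τ).support) := by
  have hsign : -(-1 : ℤˣ) ^ #(σ * τ).support = -(-1) ^ #σ.support * -(-1) ^ #τ.support := by
    rw [← hσ.sign, ← hτ.sign, ← hστ.sign, Perm.sign_mul]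
  rw [← neg_one_pow_eq_neg_one_iff_odd (R := ℤˣ) (by decide), pow_add, pow_add,
    ← neg_mul_neg ((-1 : ℤˣ) ^ #σ.support), ← hsign,
    neg_mul, ← pow_add, ← two_mul, pow_mul, neg_one_sq, one_pow]

theorem odd_intersection_of_full_cycle {α : Type*} [Fintype α] [DecidableEq α]
    (σ τ : Equiv.Perm α) (hσ : σ.IsCycle) (hτ : τ.IsCycle)
    (hcover : σ.support ∪ τ.support = Finset.univ)
    (hcyc : (σ * τ).IsCycle) (hfull : (σ * τ).support = Finset.univ) :
    Odd (σ.support ∩ τ.support).card := by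
  have hodd := hσ.odd_card_support_add_card_support_add_card_support_mul hτ hcyc
  have hcard := card_union_add_card_inter σ.support τ.support
  rw [hcover, ← hfull] at hcard
  rw [← hcard, add_right_comm, ← two_mul] at hodd
  exact (Nat.odd_add'.mp hodd).mpr (even_two_mul _)
end

section
/- Let α be a finite type and σ, τ permutations of α that are both cycles whose supports intersect in exactly one point: support(σ) ∩ support(τ) = {t}. Then σ * τ is a cycle with support equal to support(σ) ∪ support(τ). -/
/-!
The `τ`-orbit of `t` lies in `τ.support`, so it meets `σ.support` only at `t` itself. Until the
orbit returns to `t`, `σ * τ` therefore acts on it as `τ`, which puts every point of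
`τ.support` in the `σ * τ`-cycle of `t`. Applying this to `(σ * τ)⁻¹ = τ⁻¹ * σ⁻¹` covers
`σ.support`.
-/

open Finset

namespace Equiv.Perm

variable {α : Type*} [DecidableEq α] [Fintype α] {σ τ : Perm α} {t y : α}

theorem mul_pow_apply_eq_pow_apply {x : α} {n : ℕ}
    (h : ∀ j < n, (τ ^ (j + 1)) x ∉ σ.support) : ((σ * τ) ^ n) x = (τ ^ n) x := by
  induction n with
  | zero => rfl
  | succ n ih =>
    calc ((σ * τ) ^ (n + 1)) x = σ (τ (((σ * τ) ^ n) x)) := by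
          rw [pow_succ', mul_apply, mul_apply]
      _ = σ ((τ ^ (n + 1)) x) := by rw [ih fun j hj => h j (by omega), pow_succ', mul_apply]
      _ = (τ ^ (n + 1)) x := notMem_support.1 (h n n.lt_succ_self)

theorem eq_of_mem_support_of_support_inter_eq_singleton
    (hinter : σ.support ∩ τ.support = {t}) {x : α} (hσx : x ∈ σ.support) (hτx : x ∈ τ.support) :
    x = t := by
  simpa [hinter] using mem_inter.2 ⟨hσx, hτx⟩

theorem IsCycle.sameCycle_mul_of_mem_support_right (hτ : τ.IsCycle)
    (hinter : σ.support ∩ τ.support = {t}) (hy : y ∈ τ.support) : (σ * τ).SameCycle t y := by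
  have ht : t ∈ τ.support := (mem_inter.1 (hinter ▸ mem_singleton_self t)).2
  obtain ⟨k, hk, rfl⟩ := (hτ.sameCycle (mem_support.1 ht) (mem_support.1 hy)).exists_pow_eq'
  refine ⟨k, ?_⟩
  rw [zpow_natCast, mul_pow_apply_eq_pow_apply]
  intro j hj hjσ
  have hback : (τ ^ (j + 1)) t = t :=
    eq_of_mem_support_of_support_inter_eq_singleton hinter hjσ (pow_apply_mem_support.2 ht)
  exact pow_ne_one_of_lt_orderOf j.succ_ne_zero (by omega)
    ((hτ.pow_eq_one_iff' (mem_support.1 ht)).2 hback)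

theorem IsCycle.sameCycle_mul_of_mem_support_left (hσ : σ.IsCycle)
    (hinter : σ.support ∩ τ.support = {t}) (hy : y ∈ σ.support) : (σ * τ).SameCycle t y := by
  have hinv := hσ.inv.sameCycle_mul_of_mem_support_right (σ := τ⁻¹)
    (by rwa [support_inv, support_inv, inter_comm]) (by rwa [support_inv])
  rwa [← mul_inv_rev, sameCycle_inv] at hinv

theorem mul_apply_ne_self_of_support_inter_eq_singleton
    (hinter : σ.support ∩ τ.support = {t}) : (σ * τ) t ≠ t := by
  have ht : t ∈ τ.support := (mem_inter.1 (hinter ▸ mem_singleton_self t)).2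
  have hτt : τ t ≠ t := mem_support.1 ht
  have hστt : τ t ∉ σ.support := fun h =>
    hτt (eq_of_mem_support_of_support_inter_eq_singleton hinter h (apply_mem_support.2 ht))
  rwa [mul_apply, notMem_support.1 hστt]

end Equiv.Perm

open Equiv.Perm in
theorem prod_isCycle_of_inter_singleton {α : Type*} [Fintype α] [DecidableEq α]
    (σ τ : Equiv.Perm α) (hσ : σ.IsCycle) (hτ : τ.IsCycle) (t : α)
    (hinter : σ.support ∩ τ.support = {t}) :
    (σ * τ).IsCycle ∧ (σ * τ).support = σ.support ∪ τ.support := by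
  have hsame : ∀ y ∈ σ.support ∪ τ.support, (σ * τ).SameCycle t y := fun y hy =>
    (mem_union.1 hy).elim (hσ.sameCycle_mul_of_mem_support_left hinter)
      (hτ.sameCycle_mul_of_mem_support_right hinter)
  have ht := mul_apply_ne_self_of_support_inter_eq_singleton hinter
  have hsupp : (σ * τ).support = σ.support ∪ τ.support :=
    (support_mul_le σ τ).antisymm fun y hy => (hsame y hy).mem_support_iff.1 (mem_support.2 ht)
  refine ⟨⟨t, ht, fun y hy => hsame y ?_⟩, hsupp⟩
  rw [← hsupp]
  exact mem_support.2 hy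
end

section
/- Let R be a commutative ring containing a unit a, and let A be an associative unital R-algebra with an element e satisfying e² = d·e where d = -a² - a⁻². Then for every k ≥ 1, (a⁻¹·e + a·1)^k = p_k(a)·e + a^k·1, where p_k(a) = Σ_{l=0}^{k-1} (-1)^l a^(k-2-4l). -/
/-!
Because `e * e = d • e`, multiplying `c • e + u • 1` by `s • e + t • 1` gives
`(c * (s * d + t) + u * s) • e + (u * t) • 1`, so the `e`-coefficient of `(s • e + t • 1) ^ k`
is `s` times the geometric sum `∑ (s * d + t) ^ i * t ^ (k - 1 - i)`. For `s = a⁻¹`, `t = a`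
the identity `a⁻¹ * d + a = -a⁻³` turns this sum into `∑ (-1) ^ l * a ^ (k - 2 - 4 l)`
term by term.
-/

open Finset

theorem smul_add_smul_one_pow_of_mul_self_eq_smul {R A : Type*} [CommRing R] [Ring A]
    [Algebra R A] {e : A} {d : R} (he : e * e = d • e) (s t : R) (k : ℕ) :
    (s • e + t • (1 : A)) ^ k
      = (s * ∑ i ∈ range k, (s * d + t) ^ i * t ^ (k - 1 - i)) • e + t ^ k • (1 : A) := by
  induction k with
  | zero => simp
  | succ k ih =>
    rw [pow_succ', ih, geom_sum₂_comm _ _ (k + 1), Nat.add_sub_cancel, geom_sum₂_succ_eq,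
      geom_sum₂_comm t]
    simp only [add_mul, mul_add, smul_mul_smul_comm, one_mul, mul_one, he, smul_smul]
    rw [pow_succ']
    module

theorem Units.inv_mul_neg_sq_sub_inv_sq_add {R : Type*} [CommRing R] (a : Rˣ) :
    ((a⁻¹ : Rˣ) : R) * (-(a : R) ^ 2 - ((a⁻¹ : Rˣ) : R) ^ 2) + a = -((a⁻¹ : Rˣ) : R) ^ 3 := by
  linear_combination (-(a : R)) * a.mul_inv

theorem Units.inv_mul_neg_inv_pow_mul_pow {R : Type*} [CommRing R] (a : Rˣ) {k l : ℕ}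
    (hl : l < k) :
    ((a⁻¹ : Rˣ) : R) * (-((a⁻¹ : Rˣ) : R) ^ 3) ^ l * (a : R) ^ (k - 1 - l)
      = (-1) ^ l * ((a ^ ((k : ℤ) - 2 - 4 * l) : Rˣ) : R) := by
  have hexp : (k : ℤ) - 2 - 4 * l = -1 + -(3 * l : ℕ) + (k - 1 - l : ℕ) := by
    push_cast [Nat.cast_sub (by omega : l ≤ k - 1), Nat.cast_sub (by omega : 1 ≤ k)]
    ring
  rw [hexp, zpow_add, zpow_add, zpow_neg, zpow_neg, zpow_natCast, zpow_natCast, zpow_one,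
    ← inv_pow, neg_pow, ← pow_mul]
  push_cast
  ring

theorem TL_generator_power_general {R : Type*} [CommRing R] (a : Rˣ)
    {A : Type*} [Ring A] [Algebra R A] (e : A)
    (he : e * e = (-(a : R) ^ 2 - ((a⁻¹ : Rˣ) : R) ^ 2) • e)
    (k : ℕ) :
    (((a⁻¹ : Rˣ) : R) • e + (a : R) • (1 : A)) ^ k
      = (∑ l ∈ Finset.range k,
            (-1 : R) ^ l * ((a ^ ((k : ℤ) - 2 - 4 * (l : ℤ)) : Rˣ) : R)) • e
        + ((a : R) ^ k) • (1 : A) := by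
  rw [smul_add_smul_one_pow_of_mul_self_eq_smul he, a.inv_mul_neg_sq_sub_inv_sq_add, mul_sum]
  congr 2
  refine sum_congr rfl fun l hl => ?_
  rw [← mul_assoc, a.inv_mul_neg_inv_pow_mul_pow (mem_range.mp hl)]

theorem TL_generator_power {R : Type*} [CommRing R] (a : Rˣ)
    {A : Type*} [Ring A] [Algebra R A] (e : A)
    (he : e * e = (-(a : R) ^ 2 - ((a⁻¹ : Rˣ) : R) ^ 2) • e)
    (k : ℕ) (hk : 1 ≤ k) :
    (((a⁻¹ : Rˣ) : R) • e + (a : R) • (1 : A)) ^ k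
      = (∑ l ∈ Finset.range k,
            (-1 : R) ^ l * ((a ^ ((k : ℤ) - 2 - 4 * (l : ℤ)) : Rˣ) : R)) • e
        + ((a : R) ^ k) • (1 : A) :=
  TL_generator_power_general a e he k
end
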